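/- In the Gibbs model without covariates, for any species i, the quantity log P(1,…,1) − log P(0,…,0) − [log P(y^{(i)}) − log P(0,…,0)] equals α_{i,l} + β_{l,co-pres}·deg_{G*}(i), where y^{(i)} denotes the configuration in which only species i is present. Hence α_{i,l} + β_{l,co-pres}·deg_{G*}(i) is identifiable from the distribution. -/

import Mathlib

open Finset Real

noncomputable def ind (b : Bool) : ℝ := if b then 1 else 0

noncomputable def edgeCP {V : Type*} [Fintype V] (G : SimpleGraph V) [DecidableRel G.Adj]
    (x : V → Bool) : ℝ :=
  ∑ e ∈ G.edgeFinset, Sym2.lift ⟨fun i j => ind (x i) * ind (x j), fun i j => by ring⟩ e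

noncomputable def edgeCA {V : Type*} [Fintype V] (G : SimpleGraph V) [DecidableRel G.Adj]
    (x : V → Bool) : ℝ :=
  ∑ e ∈ G.edgeFinset,
    Sym2.lift ⟨fun i j => (1 - ind (x i)) * (1 - ind (x j)), fun i j => by ring⟩ e

noncomputable def energy {V : Type*} [Fintype V] (G : SimpleGraph V) [DecidableRel G.Adj]
    (α : V → ℝ) (bcp bca : ℝ) (x : V → Bool) : ℝ :=
  (∑ i, α i * ind (x i)) + bcp * edgeCP G x + bca * edgeCA G x

noncomputable def Zconst {V : Type*} [Fintype V] [DecidableEq V] (G : SimpleGraph V)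
    [DecidableRel G.Adj] (α : V → ℝ) (bcp bca : ℝ) : ℝ :=
  ∑ x : V → Bool, Real.exp (energy G α bcp bca x)

noncomputable def gibbs {V : Type*} [Fintype V] [DecidableEq V] (G : SimpleGraph V)
    [DecidableRel G.Adj] (α : V → ℝ) (bcp bca : ℝ) (x : V → Bool) : ℝ :=
  Real.exp (energy G α bcp bca x) / Zconst G α bcp bca

/-!
The partition function cancels from every log-ratio of Gibbs probabilities, so the quantity is
the energy difference between the all-present configuration and `y⁽ⁱ⁾`. Switching `i` off removes
`α i` from the linear term and exactly the `deg i` co-presence edges at `i`, while it creates no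
co-absent edge: an edge has two distinct endpoints, so at most one of them is absent in `y⁽ⁱ⁾`.
-/

section

variable {V : Type*} [Fintype V] (G : SimpleGraph V) [DecidableRel G.Adj]

theorem Zconst_pos [DecidableEq V] (α : V → ℝ) (bcp bca : ℝ) : 0 < Zconst G α bcp bca :=
  Finset.sum_pos (fun _ _ => exp_pos _) univ_nonempty

theorem log_gibbs [DecidableEq V] (α : V → ℝ) (bcp bca : ℝ) (x : V → Bool) :
    log (gibbs G α bcp bca x) = energy G α bcp bca x - log (Zconst G α bcp bca) := by
  rw [gibbs, log_div (exp_ne_zero _) (Zconst_pos G α bcp bca).ne', log_exp]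

theorem log_gibbs_sub_log_gibbs [DecidableEq V] (α : V → ℝ) (bcp bca : ℝ) (x y : V → Bool) :
    log (gibbs G α bcp bca x) - log (gibbs G α bcp bca y) =
      energy G α bcp bca x - energy G α bcp bca y := by
  rw [log_gibbs, log_gibbs, sub_sub_sub_cancel_right]

theorem sum_mul_ind_sub_sum_mul_ind_update [DecidableEq V] (α : V → ℝ) {x : V → Bool} {i : V}
    (hi : x i = true) :
    (∑ j, α j * ind (x j)) - ∑ j, α j * ind (Function.update x i false j) = α i := by
  rw [← sum_sub_distrib, sum_eq_single i (fun j _ hj => by simp [hj]) (by simp)]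
  simp [hi, ind]

theorem edgeCA_eq_zero {x : V → Bool} (hx : ∀ a b, G.Adj a b → x a = true ∨ x b = true) :
    edgeCA G x = 0 := by
  refine sum_eq_zero fun e he => ?_
  induction e using Sym2.ind with
  | _ a b =>
    rcases hx a b (G.mem_edgeFinset.mp he) with h | h <;> simp [ind, h]

theorem edgeCP_true_sub_edgeCP_update [DecidableEq V] (i : V) :
    edgeCP G (fun _ => true) - edgeCP G (Function.update (fun _ => true) i false) =
      G.degree i := by
  have edge_term : ∀ e ∈ G.edgeFinset,
      Sym2.lift ⟨fun a b => ind true * ind true, fun a b => by ring⟩ e -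
        Sym2.lift ⟨fun a b => ind (Function.update (fun _ => true) i false a) *
          ind (Function.update (fun _ => true) i false b), fun a b => by ring⟩ e =
        if i ∈ e then 1 else 0 := by
    intro e he
    induction e using Sym2.ind with
    | _ a b =>
      have hab : a ≠ b := G.ne_of_adj (G.mem_edgeFinset.mp he)
      by_cases ha : a = i
      · subst ha
        simp [ind, Function.update, hab.symm]
      · by_cases hb : b = i
        · subst hb
          simp [ind, Function.update]
        · simp [ind, Function.update, ha, hb, Ne.symm ha, Ne.symm hb]
  rw [edgeCP, edgeCP, ← sum_sub_distrib, sum_congr rfl edge_term, sum_boole,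
    ← G.incidenceFinset_eq_filter, G.card_incidenceFinset_eq_degree]

theorem energy_true_sub_energy_update [DecidableEq V] (α : V → ℝ) (bcp bca : ℝ) (i : V) :
    energy G α bcp bca (fun _ => true) -
        energy G α bcp bca (Function.update (fun _ => true) i false) =
      α i + bcp * G.degree i := by
  have hlin := sum_mul_ind_sub_sum_mul_ind_update α (x := fun _ => true) (i := i) rfl
  have hCP := edgeCP_true_sub_edgeCP_update G i
  have hCA_true : edgeCA G (fun _ => true) = 0 := edgeCA_eq_zero G fun _ _ _ => .inl rfl
  have hCA_update : edgeCA G (Function.update (fun _ => true) i false) = 0 :=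
    edgeCA_eq_zero G fun a b hab => by
      by_cases ha : a = i
      · exact .inr (by simp [Function.update, (ha ▸ G.ne_of_adj hab).symm])
      · exact .inl (by simp [Function.update, ha])
  rw [energy, energy, hCA_true, hCA_update]
  linear_combination hlin + bcp * hCP

end

/-- for any species `i`, with `y⁽ⁱ⁾` the configuration in which only `i` is
absent (all other species present),
`[log P(all 1) − log P(all 0)] − [log P(y⁽ⁱ⁾) − log P(all 0)] = α_i + β_cp·deg(i)`. -/
theorem identifiability_alpha_beta {V : Type*} [Fintype V] [DecidableEq V]
    (G : SimpleGraph V) [DecidableRel G.Adj] (α : V → ℝ) (bcp bca : ℝ) (i : V) :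
    (Real.log (gibbs G α bcp bca (fun _ => true))
        - Real.log (gibbs G α bcp bca (fun _ => false)))
      - (Real.log (gibbs G α bcp bca (Function.update (fun _ => true) i false))
        - Real.log (gibbs G α bcp bca (fun _ => false))) =
      α i + bcp * (G.degree i : ℝ) := by
  rw [sub_sub_sub_cancel_right, log_gibbs_sub_log_gibbs, energy_true_sub_energy_update]
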